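/- Let N ≥ 1 and let M be an N×N Hermitian positive semidefinite complex matrix, with Ω(s) = (1/N)·Tr[(M + s·I)⁻¹] for s > 0. Then the function g(s) = 1/Ω(s) − s is nondecreasing on (0, ∞); moreover, if M has at least two distinct eigenvalues, g is strictly increasing on (0, ∞). Equivalently, the transfer function φ(v) = 1/Ω(1/v) − 1/v is nonincreasing in v > 0, and strictly decreasing when M has at least two distinct eigenvalues. -/

import Mathlib

/-!
Diagonalising `M`, `1 / Ω(s) = N / ∑ᵢ (λᵢ + s)⁻¹` is the harmonic mean `H(s)` of the `λᵢ + s`.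
For `a < b` put `A = ∑ (λᵢ + a)⁻¹`, `B = ∑ (λᵢ + b)⁻¹`, `P = ∑ (λᵢ + a)⁻¹ (λᵢ + b)⁻¹`.
Then `A - B = (b - a) P`, hence `H(b) - H(a) = N (A - B) / (A B) = (b - a) · N P / (A B)`,
and `A B ≤ N P` is Chebyshev's sum inequality for the similarly ordered sequences
`(λᵢ + a)⁻¹` and `(λᵢ + b)⁻¹`: `2 (N P - A B) = ∑ᵢ ∑ⱼ (λᵢ - λⱼ)² / (…) ≥ 0`, with strict
inequality as soon as two eigenvalues differ. Finally `φ(v) = g(1 / v)`.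
-/

open Matrix
open scoped ComplexOrder

namespace Matrix.IsHermitian

variable {n 𝕜 : Type*} [Fintype n] [DecidableEq n] [RCLike 𝕜] {A : Matrix n n 𝕜}

theorem trace_cfc (hA : A.IsHermitian) (f : ℝ → ℝ) :
    (cfc f A).trace = ∑ i, (f (hA.eigenvalues i) : 𝕜) := by
  rw [hA.cfc_eq, IsHermitian.cfc, Unitary.conjStarAlgAut_apply, trace_mul_cycle,
    Unitary.coe_star_mul_self, one_mul, trace_diagonal]
  rfl

theorem inv_add_smul_one_eq_cfc (hA : A.IsHermitian) {s : ℝ}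
    (hs : ∀ i, hA.eigenvalues i + s ≠ 0) :
    (A + (s : 𝕜) • 1)⁻¹ = cfc (fun x => (x + s)⁻¹) A := by
  have hspec : ∀ x ∈ spectrum ℝ A, x + s ≠ 0 := by
    rw [hA.spectrum_real_eq_range_eigenvalues]
    rintro - ⟨i, rfl⟩
    exact hs i
  rw [cfc_inv (fun x => x + s) A hspec, cfc_add_const s (fun x => x) A, cfc_id' ℝ A,
    nonsing_inv_eq_ringInverse, Algebra.algebraMap_eq_smul_one,
    RCLike.real_smul_eq_coe_smul (K := 𝕜)]

theorem trace_inv_add_smul_one (hA : A.IsHermitian) {s : ℝ}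
    (hs : ∀ i, hA.eigenvalues i + s ≠ 0) :
    (A + (s : 𝕜) • 1)⁻¹.trace = ((∑ i, (hA.eigenvalues i + s)⁻¹ : ℝ) : 𝕜) := by
  rw [hA.inv_add_smul_one_eq_cfc hs, hA.trace_cfc]
  push_cast
  rfl

end Matrix.IsHermitian

section ShiftedHarmonicMean

variable {ι : Type*} [Fintype ι]

theorem Fintype.sum_sum_sub_mul_sub {R : Type*} [CommRing R] (f g : ι → R) :
    ∑ i, ∑ j, (f i - f j) * (g i - g j)
      = 2 * (Fintype.card ι * ∑ i, f i * g i - (∑ i, f i) * ∑ i, g i) := by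
  have hexpand : ∀ i j, (f i - f j) * (g i - g j)
      = f i * g i + f j * g j - f i * g j - f j * g i := fun i j => by ring
  simp only [hexpand, Finset.sum_add_distrib, Finset.sum_sub_distrib, Finset.sum_const,
    Finset.card_univ, nsmul_eq_mul, ← Finset.mul_sum, ← Finset.sum_mul]
  ring

theorem inv_add_sub_inv_add_mul_inv_add_sub_inv_add {K : Type*} [Field K] {x y a b : K}
    (hxa : x + a ≠ 0) (hya : y + a ≠ 0) (hxb : x + b ≠ 0) (hyb : y + b ≠ 0) :
    ((x + a)⁻¹ - (y + a)⁻¹) * ((x + b)⁻¹ - (y + b)⁻¹)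
      = (x - y) ^ 2 / ((x + a) * (y + a) * (x + b) * (y + b)) := by
  field_simp
  ring

noncomputable def shiftedHarmonicMean (lam : ι → ℝ) (s : ℝ) : ℝ :=
  Fintype.card ι / ∑ i, (lam i + s)⁻¹

variable {lam : ι → ℝ} {a b : ℝ}

theorem sum_inv_add_pos [Nonempty ι] (ha : ∀ i, 0 < lam i + a) : 0 < ∑ i, (lam i + a)⁻¹ :=
  Finset.sum_pos (fun i _ => inv_pos.2 (ha i)) Finset.univ_nonempty

theorem two_mul_card_mul_sum_inv_add_mul_inv_add_sub (ha : ∀ i, lam i + a ≠ 0)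
    (hb : ∀ i, lam i + b ≠ 0) :
    2 * (Fintype.card ι * ∑ i, (lam i + a)⁻¹ * (lam i + b)⁻¹
        - (∑ i, (lam i + a)⁻¹) * ∑ i, (lam i + b)⁻¹)
      = ∑ i, ∑ j, (lam i - lam j) ^ 2
          / ((lam i + a) * (lam j + a) * (lam i + b) * (lam j + b)) := by
  rw [← Fintype.sum_sum_sub_mul_sub]
  exact Finset.sum_congr rfl fun i _ => Finset.sum_congr rfl fun j _ =>
    inv_add_sub_inv_add_mul_inv_add_sub_inv_add (ha i) (ha j) (hb i) (hb j)

theorem sum_inv_add_sub_sum_inv_add (ha : ∀ i, lam i + a ≠ 0) (hb : ∀ i, lam i + b ≠ 0) :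
    ∑ i, (lam i + a)⁻¹ - ∑ i, (lam i + b)⁻¹ = (b - a) * ∑ i, (lam i + a)⁻¹ * (lam i + b)⁻¹ := by
  rw [← Finset.sum_sub_distrib, Finset.mul_sum]
  refine Finset.sum_congr rfl fun i _ => ?_
  field_simp [ha i, hb i]
  ring

theorem sum_inv_add_mul_sum_inv_add_le (ha : ∀ i, 0 < lam i + a) (hb : ∀ i, 0 < lam i + b) :
    (∑ i, (lam i + a)⁻¹) * ∑ i, (lam i + b)⁻¹
      ≤ Fintype.card ι * ∑ i, (lam i + a)⁻¹ * (lam i + b)⁻¹ := by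
  have hsum :=
    two_mul_card_mul_sum_inv_add_mul_inv_add_sub (fun i => (ha i).ne') (fun i => (hb i).ne')
  have hnonneg : 0 ≤ ∑ i, ∑ j, (lam i - lam j) ^ 2
      / ((lam i + a) * (lam j + a) * (lam i + b) * (lam j + b)) :=
    Finset.sum_nonneg fun i _ => Finset.sum_nonneg fun j _ =>
      div_nonneg (sq_nonneg _) (mul_pos (mul_pos (mul_pos (ha i) (ha j)) (hb i)) (hb j)).le
  linarith

theorem sum_inv_add_mul_sum_inv_add_lt (ha : ∀ i, 0 < lam i + a) (hb : ∀ i, 0 < lam i + b)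
    (hlam : ∃ i j, lam i ≠ lam j) :
    (∑ i, (lam i + a)⁻¹) * ∑ i, (lam i + b)⁻¹
      < Fintype.card ι * ∑ i, (lam i + a)⁻¹ * (lam i + b)⁻¹ := by
  obtain ⟨i₀, j₀, hij⟩ := hlam
  have hsum :=
    two_mul_card_mul_sum_inv_add_mul_inv_add_sub (fun i => (ha i).ne') (fun i => (hb i).ne')
  have hden : ∀ i j, 0 < (lam i + a) * (lam j + a) * (lam i + b) * (lam j + b) := fun i j =>
    mul_pos (mul_pos (mul_pos (ha i) (ha j)) (hb i)) (hb j)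
  have hterm : ∀ i j, 0 ≤ (lam i - lam j) ^ 2
      / ((lam i + a) * (lam j + a) * (lam i + b) * (lam j + b)) := fun i j =>
    div_nonneg (sq_nonneg _) (hden i j).le
  have hpos : 0 < ∑ i, ∑ j, (lam i - lam j) ^ 2
      / ((lam i + a) * (lam j + a) * (lam i + b) * (lam j + b)) :=
    Finset.sum_pos' (fun i _ => Finset.sum_nonneg fun j _ => hterm i j)
      ⟨i₀, Finset.mem_univ _, Finset.sum_pos' (fun j _ => hterm i₀ j)
        ⟨j₀, Finset.mem_univ _, div_pos (sq_pos_of_ne_zero (sub_ne_zero.2 hij)) (hden i₀ j₀)⟩⟩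
  linarith

theorem shiftedHarmonicMean_sub_sub_shiftedHarmonicMean_sub [Nonempty ι]
    (ha : ∀ i, 0 < lam i + a) (hb : ∀ i, 0 < lam i + b) :
    (shiftedHarmonicMean lam b - b) - (shiftedHarmonicMean lam a - a)
      = (b - a) * (Fintype.card ι * ∑ i, (lam i + a)⁻¹ * (lam i + b)⁻¹
          - (∑ i, (lam i + a)⁻¹) * ∑ i, (lam i + b)⁻¹)
        / ((∑ i, (lam i + a)⁻¹) * ∑ i, (lam i + b)⁻¹) := by
  have hdiff := sum_inv_add_sub_sum_inv_add (fun i => (ha i).ne') (fun i => (hb i).ne')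
  have hA := sum_inv_add_pos ha
  have hB := sum_inv_add_pos hb
  unfold shiftedHarmonicMean
  generalize ∑ i, (lam i + a)⁻¹ = A at *
  generalize ∑ i, (lam i + b)⁻¹ = B at *
  generalize ∑ i, (lam i + a)⁻¹ * (lam i + b)⁻¹ = P at *
  field_simp
  linear_combination (Fintype.card ι : ℝ) * hdiff

theorem monotoneOn_shiftedHarmonicMean_sub [Nonempty ι] :
    MonotoneOn (fun s => shiftedHarmonicMean lam s - s) {s | ∀ i, 0 < lam i + s} := by
  intro a ha b hb hab
  refine sub_nonneg.1 ?_
  rw [shiftedHarmonicMean_sub_sub_shiftedHarmonicMean_sub ha hb]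
  exact div_nonneg
    (mul_nonneg (sub_nonneg.2 hab) (sub_nonneg.2 (sum_inv_add_mul_sum_inv_add_le ha hb)))
    (mul_pos (sum_inv_add_pos ha) (sum_inv_add_pos hb)).le

theorem strictMonoOn_shiftedHarmonicMean_sub (hlam : ∃ i j, lam i ≠ lam j) :
    StrictMonoOn (fun s => shiftedHarmonicMean lam s - s) {s | ∀ i, 0 < lam i + s} := by
  have : Nonempty ι := ⟨hlam.choose⟩
  intro a ha b hb hab
  refine sub_pos.1 ?_
  rw [shiftedHarmonicMean_sub_sub_shiftedHarmonicMean_sub ha hb]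
  exact div_pos
    (mul_pos (sub_pos.2 hab) (sub_pos.2 (sum_inv_add_mul_sum_inv_add_lt ha hb hlam)))
    (mul_pos (sum_inv_add_pos ha) (sum_inv_add_pos hb))

end ShiftedHarmonicMean

/-- with `Ω(s) = (1/N)·Tr[(M + s·I)⁻¹]`, the function `g(s) = 1/Ω(s) − s`
is nondecreasing on `(0,∞)`, strictly increasing if `M` has at least two distinct
eigenvalues; equivalently `φ(v) = 1/Ω(1/v) − 1/v` is nonincreasing in `v > 0`, strictly
decreasing when `M` has two distinct eigenvalues. -/
theorem stmt_6 {N : ℕ} (hN : 1 ≤ N) (M : Matrix (Fin N) (Fin N) ℂ)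
    (hM : M.PosSemidef)
    (Ω g φ : ℝ → ℝ)
    (hΩ : ∀ s : ℝ, 0 < s →
      Ω s = (1 / (N : ℝ)) * (((M + (s : ℂ) • (1 : Matrix (Fin N) (Fin N) ℂ))⁻¹).trace).re)
    (hg : ∀ s : ℝ, 0 < s → g s = 1 / Ω s - s)
    (hφ : ∀ v : ℝ, 0 < v → φ v = 1 / Ω (1 / v) - 1 / v) :
    MonotoneOn g (Set.Ioi 0) ∧
    ((∃ i j, hM.1.eigenvalues i ≠ hM.1.eigenvalues j) → StrictMonoOn g (Set.Ioi 0)) ∧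
    AntitoneOn φ (Set.Ioi 0) ∧
    ((∃ i j, hM.1.eigenvalues i ≠ hM.1.eigenvalues j) → StrictAntiOn φ (Set.Ioi 0)) := by
  have : NeZero N := ⟨by omega⟩
  have hpos : Set.Ioi 0 ⊆ {s | ∀ i, 0 < hM.1.eigenvalues i + s} := fun s hs i =>
    add_pos_of_nonneg_of_pos (hM.eigenvalues_nonneg i) hs
  have hg_eq : Set.EqOn (fun s => shiftedHarmonicMean hM.1.eigenvalues s - s) g (Set.Ioi 0) := by
    intro s hs
    -- the `•` in `hΩ` is only defeq to the one in `trace_inv_add_smul_one`, so `rw` cannot match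
    have htr : ((M + (s : ℂ) • (1 : Matrix (Fin N) (Fin N) ℂ))⁻¹).trace.re
        = ∑ i, (hM.1.eigenvalues i + s)⁻¹ :=
      (congrArg Complex.re (hM.1.trace_inv_add_smul_one fun i => (hpos hs i).ne')).trans
        (Complex.ofReal_re _)
    rw [hg s hs, hΩ s hs, htr]
    simp only [shiftedHarmonicMean, Fintype.card_fin]
    field_simp
  have hφ_eq : Set.EqOn (g ∘ fun v => v⁻¹) φ (Set.Ioi 0) := fun v hv => by
    rw [Function.comp_apply, hg _ (inv_pos.2 hv), hφ v hv, one_div v]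
  have hinv : Set.MapsTo (fun v : ℝ => v⁻¹) (Set.Ioi 0) (Set.Ioi 0) := fun v (hv : 0 < v) =>
    (inv_pos.2 hv : 0 < v⁻¹)
  have hmono : MonotoneOn g (Set.Ioi 0) :=
    (monotoneOn_shiftedHarmonicMean_sub.mono hpos).congr hg_eq
  have hstrict : (∃ i j, hM.1.eigenvalues i ≠ hM.1.eigenvalues j) → StrictMonoOn g (Set.Ioi 0) :=
    fun h => ((strictMonoOn_shiftedHarmonicMean_sub h).mono hpos).congr hg_eq
  exact ⟨hmono, hstrict, (hmono.comp_AntitoneOn antitoneOn_inv_pos hinv).congr hφ_eq,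
    fun h => ((hstrict h).comp_strictAntiOn strictAntiOn_inv_pos hinv).congr hφ_eq⟩
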